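/- For each i with 1 ≤ i ≤ n−1: τ₁(β_i)(X_i) = X_i ⊗ X_{i+1} − X_{i+1} ⊗ X_i, and τ₁(β_i)(X_j) = 0 for every j ≠ i. Equivalently, τ₁(β_i) = l_i ⊗ (X_i ⊗ X_{i+1} − X_{i+1} ⊗ X_i), where l_i is the i-th coordinate functional on H. -/

import Mathlib

noncomputable section
open scoped TensorProduct


/-- `H = Fin n →₀ ℤ`, the first integral homology of the free group. -/
abbrev Hz (n : ℕ) : Type := Fin n →₀ ℤ

/-- The standard basis vector `X i`. -/
def Xz (n : ℕ) (i : Fin n) : Hz n := Finsupp.single i 1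

/-- `H ⊗ℤ H`. -/
abbrev HHz (n : ℕ) : Type := Hz n ⊗[ℤ] Hz n

/-- The degree ≤ 2 truncation of the Magnus algebra: underlying set `H × (H ⊗ H)`,
with multiplication `(u,s)·(u',s') = (u+u', s+s'+u⊗u')`. -/
def Mn (n : ℕ) : Type := Hz n × HHz n

namespace Mn

variable {n : ℕ}

instance : Group (Mn n) where
  mul a b := (a.1 + b.1, a.2 + b.2 + a.1 ⊗ₜ[ℤ] b.1)
  one := ((0 : Hz n), (0 : HHz n))
  inv a := (-a.1, -a.2 + a.1 ⊗ₜ[ℤ] a.1)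
  mul_assoc a b c := by
    show (_, _) = (_, _)
    refine Prod.ext (add_assoc _ _ _) ?_
    show a.2 + b.2 + a.1 ⊗ₜ[ℤ] b.1 + c.2 + (a.1 + b.1) ⊗ₜ[ℤ] c.1
        = a.2 + (b.2 + c.2 + b.1 ⊗ₜ[ℤ] c.1) + a.1 ⊗ₜ[ℤ] (b.1 + c.1)
    rw [TensorProduct.add_tmul, TensorProduct.tmul_add]
    abel
  one_mul a := by
    show ((0 : Hz n) + a.1, (0 : HHz n) + a.2 + (0 : Hz n) ⊗ₜ[ℤ] a.1) = a
    rw [TensorProduct.zero_tmul]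
    simp
    rfl
  mul_one a := by
    show (a.1 + 0, a.2 + (0:HHz n) + a.1 ⊗ₜ[ℤ] (0 : Hz n)) = a
    rw [TensorProduct.tmul_zero]
    simp
    rfl
  inv_mul_cancel a := by
    show (-a.1 + a.1, (-a.2 + a.1 ⊗ₜ[ℤ] a.1) + a.2 + (-a.1) ⊗ₜ[ℤ] a.1) = ((0:Hz n), (0:HHz n))
    rw [TensorProduct.neg_tmul]
    refine Prod.ext (by simp) ?_
    show _ = (0 : HHz n)
    abel

end Mn

/-- The truncated standard Magnus expansion `Θ : F_n →* M_n`, `x_i ↦ (X_i, 0)`. -/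
def Theta (n : ℕ) : FreeGroup (Fin n) →* Mn n :=
  FreeGroup.lift fun i => ((Xz n i, 0) : Mn n)

/-- The abelianization map `a : F_n → H`, the first component of `Θ`. -/
def aMap (n : ℕ) (γ : FreeGroup (Fin n)) : Hz n := (Theta n γ).1

/-- `θ₂`, the second component of the truncated Magnus expansion. -/
def theta2 (n : ℕ) (γ : FreeGroup (Fin n)) : HHz n := (Theta n γ).2

/-
Θ sends a conjugate `g h g⁻¹` to `(a h, θ₂ h + a g ⊗ a h - a h ⊗ a g)`. Since
`β_i⁻¹(x_i) = x_i x_{i+1} x_i⁻¹` and `β_i⁻¹` permutes the other generators, `θ₂(β_i⁻¹ x_j)`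
vanishes for `j ≠ i`, while for `j = i` it is the commutator `X_i ⊗ X_{i+1} - X_{i+1} ⊗ X_i`, which
`|β_i| ⊗ |β_i|` maps to its negative because `|β_i|` swaps `X_i` and `X_{i+1}`.
-/

namespace Mn

variable {n : ℕ}

lemma mul_def (a b : Mn n) : a * b = (a.1 + b.1, a.2 + b.2 + a.1 ⊗ₜ[ℤ] b.1) := rfl

lemma inv_def (a : Mn n) : a⁻¹ = (-a.1, -a.2 + a.1 ⊗ₜ[ℤ] a.1) := rfl

lemma mul_mul_inv (a b : Mn n) :
    a * b * a⁻¹ = (b.1, b.2 + a.1 ⊗ₜ[ℤ] b.1 - b.1 ⊗ₜ[ℤ] a.1) := by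
  rw [mul_def, mul_def, inv_def]
  refine Prod.ext (show a.1 + b.1 + -a.1 = b.1 by abel) ?_
  show a.2 + b.2 + a.1 ⊗ₜ[ℤ] b.1 + (-a.2 + a.1 ⊗ₜ[ℤ] a.1) + (a.1 + b.1) ⊗ₜ[ℤ] (-a.1) = _
  simp only [TensorProduct.add_tmul, TensorProduct.tmul_neg]
  abel

lemma inv_mul_mul (a b : Mn n) :
    a⁻¹ * b * a = (b.1, b.2 + b.1 ⊗ₜ[ℤ] a.1 - a.1 ⊗ₜ[ℤ] b.1) := by
  rw [mul_def, mul_def, inv_def]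
  refine Prod.ext (show -a.1 + b.1 + a.1 = b.1 by abel) ?_
  show -a.2 + a.1 ⊗ₜ[ℤ] a.1 + b.2 + (-a.1) ⊗ₜ[ℤ] b.1 + a.2 + (-a.1 + b.1) ⊗ₜ[ℤ] a.1 = _
  simp only [TensorProduct.add_tmul, TensorProduct.neg_tmul]
  abel

end Mn

lemma Theta_of (n : ℕ) (i : Fin n) : Theta n (FreeGroup.of i) = (Xz n i, 0) :=
  FreeGroup.lift_apply_of

lemma aMap_of (n : ℕ) (i : Fin n) : aMap n (FreeGroup.of i) = Xz n i := by
  rw [aMap, Theta_of]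

lemma theta2_of (n : ℕ) (i : Fin n) : theta2 n (FreeGroup.of i) = 0 := by
  rw [theta2, Theta_of]

lemma theta2_of_mul_of_mul_inv (n : ℕ) (i k : Fin n) :
    theta2 n (FreeGroup.of i * FreeGroup.of k * (FreeGroup.of i)⁻¹) =
      Xz n i ⊗ₜ[ℤ] Xz n k - Xz n k ⊗ₜ[ℤ] Xz n i := by
  rw [theta2, map_mul, map_mul, map_inv, Mn.mul_mul_inv, Theta_of, Theta_of, zero_add]

lemma aMap_inv_of_mul_of_mul_of (n : ℕ) (i k : Fin n) :
    aMap n ((FreeGroup.of k)⁻¹ * FreeGroup.of i * FreeGroup.of k) = Xz n i := by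
  rw [aMap, map_mul, map_mul, map_inv, Mn.inv_mul_mul, Theta_of]

section Johnson

variable {n : ℕ} {φ : MulAut (FreeGroup (Fin n))} {Φ : Hz n →+ Hz n} {τ : Hz n →+ HHz n}

lemma tau_apply_Xz_eq_zero_of_apply_of_eq_of
    (hτ : ∀ γ, τ (aMap n γ) = theta2 n γ -
      (TensorProduct.map Φ.toIntLinearMap Φ.toIntLinearMap) (theta2 n (φ⁻¹ γ)))
    {j k : Fin n} (hφ : φ (FreeGroup.of k) = FreeGroup.of j) :
    τ (Xz n j) = 0 := by
  have hinv : φ⁻¹ (FreeGroup.of j) = FreeGroup.of k := φ.symm_apply_eq.2 hφ.symm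
  conv_lhs => rw [← aMap_of, hτ]
  rw [hinv, theta2_of, theta2_of, map_zero, sub_zero]

lemma tau_apply_Xz_of_braid
    (hΦ : ∀ γ, Φ (aMap n γ) = aMap n (φ γ))
    (hτ : ∀ γ, τ (aMap n γ) = theta2 n γ -
      (TensorProduct.map Φ.toIntLinearMap Φ.toIntLinearMap) (theta2 n (φ⁻¹ γ)))
    {i k : Fin n} (hφi : φ (FreeGroup.of i) = FreeGroup.of k)
    (hφk : φ (FreeGroup.of k) = (FreeGroup.of k)⁻¹ * FreeGroup.of i * FreeGroup.of k) :
    τ (Xz n i) = Xz n i ⊗ₜ[ℤ] Xz n k - Xz n k ⊗ₜ[ℤ] Xz n i := by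
  have hΦi : Φ (Xz n i) = Xz n k := by rw [← aMap_of, hΦ, hφi, aMap_of]
  have hΦk : Φ (Xz n k) = Xz n i := by rw [← aMap_of, hΦ, hφk, aMap_inv_of_mul_of_mul_of]
  have hinv : φ⁻¹ (FreeGroup.of i) = FreeGroup.of i * FreeGroup.of k * (FreeGroup.of i)⁻¹ := by
    refine φ.symm_apply_eq.2 ?_
    rw [map_mul, map_mul, map_inv, hφi, hφk]
    group
  conv_lhs => rw [← aMap_of, hτ]
  rw [hinv, theta2_of, theta2_of_mul_of_mul_inv, map_sub,
    TensorProduct.map_tmul, TensorProduct.map_tmul]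
  simp only [AddMonoidHom.coe_toIntLinearMap, hΦi, hΦk]
  abel

end Johnson

theorem stmt7_general (n : ℕ)
    (β : Fin (n-1) → MulAut (FreeGroup (Fin n)))
    (hβ : ∀ (i : Fin (n-1)) (h1 : (i : ℕ) < n) (h2 : (i : ℕ) + 1 < n),
      β i (FreeGroup.of ⟨i, h1⟩) = FreeGroup.of ⟨(i : ℕ) + 1, h2⟩ ∧
      β i (FreeGroup.of ⟨(i : ℕ) + 1, h2⟩) =
        (FreeGroup.of (⟨(i : ℕ) + 1, h2⟩ : Fin n))⁻¹ * FreeGroup.of ⟨i, h1⟩ *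
          FreeGroup.of ⟨(i : ℕ) + 1, h2⟩ ∧
      ∀ j : Fin n, (j : ℕ) ≠ (i : ℕ) → (j : ℕ) ≠ (i : ℕ) + 1 →
        β i (FreeGroup.of j) = FreeGroup.of j)
    (Φ : MulAut (FreeGroup (Fin n)) → (Hz n →+ Hz n))
    (hΦ : ∀ (φ : MulAut (FreeGroup (Fin n))) (γ : FreeGroup (Fin n)),
      Φ φ (aMap n γ) = aMap n (φ γ))
    (τ : MulAut (FreeGroup (Fin n)) → (Hz n →+ HHz n))
    (hτ : ∀ (φ : MulAut (FreeGroup (Fin n))) (γ : FreeGroup (Fin n)),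
      τ φ (aMap n γ) = theta2 n γ -
        (TensorProduct.map (Φ φ).toIntLinearMap (Φ φ).toIntLinearMap)
          (theta2 n (φ⁻¹ γ)))
 :
    ∀ (i : Fin (n-1)) (h1 : (i : ℕ) < n) (h2 : (i : ℕ) + 1 < n),
      τ (β i) (Xz n ⟨i, h1⟩) =
        Xz n ⟨i, h1⟩ ⊗ₜ[ℤ] Xz n ⟨(i : ℕ) + 1, h2⟩ -
          Xz n ⟨(i : ℕ) + 1, h2⟩ ⊗ₜ[ℤ] Xz n ⟨i, h1⟩ ∧
      ∀ j : Fin n, j ≠ ⟨i, h1⟩ → τ (β i) (Xz n j) = 0 := by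
  intro i h1 h2
  obtain ⟨hβi, hβi1, hβfix⟩ := hβ i h1 h2
  refine ⟨tau_apply_Xz_of_braid (hΦ _) (hτ _) hβi hβi1, fun j hj => ?_⟩
  by_cases hj1 : (j : ℕ) = i + 1
  · obtain rfl : j = ⟨i + 1, h2⟩ := Fin.ext hj1
    exact tau_apply_Xz_eq_zero_of_apply_of_eq_of (hτ _) hβi
  · have hji : (j : ℕ) ≠ i := fun h => hj (Fin.ext h)
    exact tau_apply_Xz_eq_zero_of_apply_of_eq_of (hτ _) (hβfix j hji hj1)

theorem stmt7 (n : ℕ) (hn : 2 ≤ n)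
    (β : Fin (n-1) → MulAut (FreeGroup (Fin n)))
    (hβ : ∀ (i : Fin (n-1)) (h1 : (i : ℕ) < n) (h2 : (i : ℕ) + 1 < n),
      β i (FreeGroup.of ⟨i, h1⟩) = FreeGroup.of ⟨(i : ℕ) + 1, h2⟩ ∧
      β i (FreeGroup.of ⟨(i : ℕ) + 1, h2⟩) =
        (FreeGroup.of (⟨(i : ℕ) + 1, h2⟩ : Fin n))⁻¹ * FreeGroup.of ⟨i, h1⟩ *
          FreeGroup.of ⟨(i : ℕ) + 1, h2⟩ ∧
      ∀ j : Fin n, (j : ℕ) ≠ (i : ℕ) → (j : ℕ) ≠ (i : ℕ) + 1 →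
        β i (FreeGroup.of j) = FreeGroup.of j)
    (Φ : MulAut (FreeGroup (Fin n)) → (Hz n →+ Hz n))
    (hΦ : ∀ (φ : MulAut (FreeGroup (Fin n))) (γ : FreeGroup (Fin n)),
      Φ φ (aMap n γ) = aMap n (φ γ))
    (τ : MulAut (FreeGroup (Fin n)) → (Hz n →+ HHz n))
    (hτ : ∀ (φ : MulAut (FreeGroup (Fin n))) (γ : FreeGroup (Fin n)),
      τ φ (aMap n γ) = theta2 n γ -
        (TensorProduct.map (Φ φ).toIntLinearMap (Φ φ).toIntLinearMap)
          (theta2 n (φ⁻¹ γ)))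
 :
    ∀ (i : Fin (n-1)) (h1 : (i : ℕ) < n) (h2 : (i : ℕ) + 1 < n),
      τ (β i) (Xz n ⟨i, h1⟩) =
        Xz n ⟨i, h1⟩ ⊗ₜ[ℤ] Xz n ⟨(i : ℕ) + 1, h2⟩ -
          Xz n ⟨(i : ℕ) + 1, h2⟩ ⊗ₜ[ℤ] Xz n ⟨i, h1⟩ ∧
      ∀ j : Fin n, j ≠ ⟨i, h1⟩ → τ (β i) (Xz n j) = 0 :=
  stmt7_general n β hβ Φ hΦ τ hτ
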